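/- Let K ≥ 3 be an integer, θ_k = 2πk/K for k = 0,…,K−1, and let x̃_k = x_c + (R + f_k)cos θ_k, ỹ_k = y_c + (R + f_k)sin θ_k. Then the triple (x̃_c, ỹ_c, R̃) with x̃_c = x_c + (1/K)∑_{k=0}^{K−1} f_k cos θ_k, ỹ_c = y_c + (1/K)∑_{k=0}^{K−1} f_k sin θ_k, and R̃ = R + (1/K)∑_{k=0}^{K−1} f_k is a global minimizer of the circle-fitting energy: for all (a, b, r) ∈ ℝ³, C(x̃_c, ỹ_c, R̃) ≤ C(a, b, r). -/

import Mathlib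

/-!
Since the `K`-th roots of unity sum to zero for `K > 1`, the equally spaced angles satisfy
`∑ cos θ_k = ∑ sin θ_k = 0`. Together with `cos² + sin² = 1` this removes every cross term
between `a`, `b` and `r`, so the fitting energy of any data is `#s (a² + b² + r²)` minus a
linear form plus a constant; completing the square shows it is minimised at the means of
`x_k`, `y_k` and `x_k cos θ_k + y_k sin θ_k`. For the shifted contour points these means are
the stated triple.
-/

open Real Finset

theorem sum_exp_two_pi_mul_I_div_eq_zero {K : ℕ} (hK : 1 < K) :
    ∑ k ∈ range K, Complex.exp (↑(2 * π * k / K) * Complex.I) = 0 := by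
  have hζ := Complex.isPrimitiveRoot_exp K (by omega)
  rw [← hζ.geom_sum_eq_zero hK]
  refine sum_congr rfl fun k _ => ?_
  rw [← Complex.exp_nat_mul]
  push_cast
  ring_nf

theorem sum_cos_two_pi_mul_div_eq_zero {K : ℕ} (hK : 1 < K) :
    ∑ k ∈ range K, cos (2 * π * k / K) = 0 := by
  simpa only [Complex.re_sum, Complex.exp_ofReal_mul_I_re, Complex.zero_re] using
    congrArg Complex.re (sum_exp_two_pi_mul_I_div_eq_zero hK)

theorem sum_sin_two_pi_mul_div_eq_zero {K : ℕ} (hK : 1 < K) :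
    ∑ k ∈ range K, sin (2 * π * k / K) = 0 := by
  simpa only [Complex.im_sum, Complex.exp_ofReal_mul_I_im, Complex.zero_im] using
    congrArg Complex.im (sum_exp_two_pi_mul_I_div_eq_zero hK)

noncomputable def circleFitEnergy {ι : Type*} (s : Finset ι) (x y θ : ι → ℝ) (a b r : ℝ) :
    ℝ :=
  ∑ k ∈ s, ((x k - a - r * cos (θ k)) ^ 2 + (y k - b - r * sin (θ k)) ^ 2)

section CircleFit

variable {ι : Type*} {s : Finset ι} {x y θ : ι → ℝ}

theorem circleFitEnergy_eq (hcos : ∑ k ∈ s, cos (θ k) = 0) (hsin : ∑ k ∈ s, sin (θ k) = 0)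
    (a b r : ℝ) :
    circleFitEnergy s x y θ a b r =
      #s * (a ^ 2 + b ^ 2 + r ^ 2)
        - 2 * (a * ∑ k ∈ s, x k + b * ∑ k ∈ s, y k
          + r * ∑ k ∈ s, (x k * cos (θ k) + y k * sin (θ k)))
        + ∑ k ∈ s, (x k ^ 2 + y k ^ 2) := by
  have hterm : ∀ k ∈ s, (x k - a - r * cos (θ k)) ^ 2 + (y k - b - r * sin (θ k)) ^ 2 =
      (a ^ 2 + b ^ 2 + r ^ 2)
        - 2 * (a * x k + b * y k + r * (x k * cos (θ k) + y k * sin (θ k)))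
        + (x k ^ 2 + y k ^ 2) + 2 * a * r * cos (θ k) + 2 * b * r * sin (θ k) := fun k _ => by
    linear_combination r ^ 2 * sin_sq_add_cos_sq (θ k)
  rw [circleFitEnergy, sum_congr rfl hterm]
  simp only [sum_add_distrib, sum_sub_distrib, ← mul_sum, sum_const, nsmul_eq_mul, hcos, hsin]
  ring

theorem circleFitEnergy_eq_mean_add (hcos : ∑ k ∈ s, cos (θ k) = 0)
    (hsin : ∑ k ∈ s, sin (θ k) = 0) (a b r : ℝ) :
    circleFitEnergy s x y θ a b r =
      circleFitEnergy s x y θ ((∑ k ∈ s, x k) / #s) ((∑ k ∈ s, y k) / #s)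
          ((∑ k ∈ s, (x k * cos (θ k) + y k * sin (θ k))) / #s)
        + #s * ((a - (∑ k ∈ s, x k) / #s) ^ 2 + (b - (∑ k ∈ s, y k) / #s) ^ 2
          + (r - (∑ k ∈ s, (x k * cos (θ k) + y k * sin (θ k))) / #s) ^ 2) := by
  rcases s.eq_empty_or_nonempty with rfl | hs
  · simp [circleFitEnergy]
  have hcard : (#s : ℝ) ≠ 0 := by positivity
  simp only [circleFitEnergy_eq hcos hsin]
  field_simp
  ring

theorem circleFitEnergy_mean_le (hcos : ∑ k ∈ s, cos (θ k) = 0)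
    (hsin : ∑ k ∈ s, sin (θ k) = 0) (a b r : ℝ) :
    circleFitEnergy s x y θ ((∑ k ∈ s, x k) / #s) ((∑ k ∈ s, y k) / #s)
        ((∑ k ∈ s, (x k * cos (θ k) + y k * sin (θ k))) / #s) ≤
      circleFitEnergy s x y θ a b r := by
  rw [circleFitEnergy_eq_mean_add hcos hsin a b r]
  apply le_add_of_nonneg_right
  positivity

theorem circleFitEnergy_shifted_le (hs : s.Nonempty) (hcos : ∑ k ∈ s, cos (θ k) = 0)
    (hsin : ∑ k ∈ s, sin (θ k) = 0) {xc yc R : ℝ} {f : ι → ℝ}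
    (hx : ∀ k, x k = xc + (R + f k) * cos (θ k)) (hy : ∀ k, y k = yc + (R + f k) * sin (θ k))
    (a b r : ℝ) :
    circleFitEnergy s x y θ (xc + (∑ k ∈ s, f k * cos (θ k)) / #s)
        (yc + (∑ k ∈ s, f k * sin (θ k)) / #s) (R + (∑ k ∈ s, f k) / #s) ≤
      circleFitEnergy s x y θ a b r := by
  have hcard : (#s : ℝ) ≠ 0 := by positivity
  have hxmean : xc + (∑ k ∈ s, f k * cos (θ k)) / #s = (∑ k ∈ s, x k) / #s := by
    simp only [hx, add_mul, sum_add_distrib, ← mul_sum, sum_const, nsmul_eq_mul, hcos]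
    field_simp
    ring
  have hymean : yc + (∑ k ∈ s, f k * sin (θ k)) / #s = (∑ k ∈ s, y k) / #s := by
    simp only [hy, add_mul, sum_add_distrib, ← mul_sum, sum_const, nsmul_eq_mul, hsin]
    field_simp
    ring
  have hradial : ∀ k, x k * cos (θ k) + y k * sin (θ k) =
      xc * cos (θ k) + yc * sin (θ k) + (R + f k) := fun k => by
    rw [hx, hy]
    linear_combination (R + f k) * sin_sq_add_cos_sq (θ k)
  have hrmean : R + (∑ k ∈ s, f k) / #s =
      (∑ k ∈ s, (x k * cos (θ k) + y k * sin (θ k))) / #s := by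
    simp only [hradial, sum_add_distrib, ← mul_sum, sum_const, nsmul_eq_mul, hcos, hsin]
    field_simp
    ring
  rw [hxmean, hymean, hrmean]
  exact circleFitEnergy_mean_le hcos hsin a b r

end CircleFit

/-- The triple (shifted-average center, radius updated by the average force)
is a global minimizer of the circle-fitting energy. -/
theorem global_minimizer
    (K : ℕ) (hK : 3 ≤ K) (xc yc R : ℝ) (f : ℕ → ℝ)
    (θ : ℕ → ℝ) (hθ : ∀ k, θ k = 2 * Real.pi * k / K)
    (xt yt : ℕ → ℝ)
    (hxt : ∀ k, xt k = xc + (R + f k) * Real.cos (θ k))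
    (hyt : ∀ k, yt k = yc + (R + f k) * Real.sin (θ k))
    (C : ℝ → ℝ → ℝ → ℝ)
    (hC : ∀ a b r, C a b r =
      ∑ k ∈ Finset.range K,
        ((xt k - a - r * Real.cos (θ k)) ^ 2 + (yt k - b - r * Real.sin (θ k)) ^ 2))
    (xtc ytc Rt : ℝ)
    (hxtc : xtc = xc + (1 / (K : ℝ)) * ∑ k ∈ Finset.range K, f k * Real.cos (θ k))
    (hytc : ytc = yc + (1 / (K : ℝ)) * ∑ k ∈ Finset.range K, f k * Real.sin (θ k))
    (hRt : Rt = R + (1 / (K : ℝ)) * ∑ k ∈ Finset.range K, f k) :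
    ∀ a b r : ℝ, C xtc ytc Rt ≤ C a b r := by
  have hcos : ∑ k ∈ range K, cos (θ k) = 0 := by
    simpa only [hθ] using sum_cos_two_pi_mul_div_eq_zero (by omega : 1 < K)
  have hsin : ∑ k ∈ range K, sin (θ k) = 0 := by
    simpa only [hθ] using sum_sin_two_pi_mul_div_eq_zero (by omega : 1 < K)
  have hC' : C = circleFitEnergy (range K) xt yt θ := by
    funext a b r
    exact hC a b r
  intro a b r
  have hmin := circleFitEnergy_shifted_le (nonempty_range_iff.mpr (by omega)) hcos hsin hxt hyt
    a b r
  rw [card_range] at hmin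
  rwa [hC', hxtc, hytc, hRt, one_div_mul_eq_div, one_div_mul_eq_div, one_div_mul_eq_div]
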